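/- arXiv:2108.12669 — 6 statements merged into one kernel-verified Lean document; each statement's English description precedes it below -/
import Mathlib

section
/- Let ψ be any proper 3-coloring of the graph P(u,v,5), with path vertices v₁, v₂, v₃, v₄, v₅. Then at least one of the following holds: ψ(v₁) = ψ(v₃), or ψ(v₂) = ψ(v₄), or ψ(v₃) = ψ(v₅). -/
/-- The base relation for the graph `P(u,v,b)`: vertices are `Sum.inl 0 = u`,
`Sum.inl 1 = v`, and `Sum.inr i = v_{i+1}` (0-indexed path vertices).
Edges: consecutive path vertices, `u` to odd-numbered path vertices `v₁, v₃, …`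
(even 0-based index), and `v` to even-numbered ones `v₂, v₄, …`. -/
def PAdj (b : ℕ) : (Fin 2 ⊕ Fin b) → (Fin 2 ⊕ Fin b) → Prop
  | Sum.inr i, Sum.inr j => (j : ℕ) = (i : ℕ) + 1
  | Sum.inl x, Sum.inr i => (x : ℕ) = (i : ℕ) % 2
  | _, _ => False

/-- The graph `P(u,v,b)`. -/
def Pgraph (b : ℕ) : SimpleGraph (Fin 2 ⊕ Fin b) := SimpleGraph.fromRel (PAdj b)

/-- The set of proper 3-colorings of a graph `G`. -/
def properColorings {V : Type*} (G : SimpleGraph V) : Set (V → Fin 3) :=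
  {ψ | ∀ a b, G.Adj a b → ψ a ≠ ψ b}

/-- Lemma 2(a): for any proper 3-coloring `ψ` of `P(u,v,5)`, at least one of
`ψ(v₁) = ψ(v₃)`, `ψ(v₂) = ψ(v₄)`, `ψ(v₃) = ψ(v₅)` holds. -/
theorem stmt0 (ψ : (Fin 2 ⊕ Fin 5) → Fin 3) (hψ : ψ ∈ properColorings (Pgraph 5)) :
    ψ (Sum.inr 0) = ψ (Sum.inr 2) ∨ ψ (Sum.inr 1) = ψ (Sum.inr 3) ∨
      ψ (Sum.inr 2) = ψ (Sum.inr 4) := by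
  have adj : ∀ x y : Fin 2 ⊕ Fin 5, x ≠ y → PAdj 5 x y → ψ x ≠ ψ y := by
    intro x y h1 h2
    exact hψ x y ⟨h1, Or.inl h2⟩
  have h01 := adj (Sum.inr 0) (Sum.inr 1) (by decide) (by unfold PAdj; decide)
  have h12 := adj (Sum.inr 1) (Sum.inr 2) (by decide) (by unfold PAdj; decide)
  have h23 := adj (Sum.inr 2) (Sum.inr 3) (by decide) (by unfold PAdj; decide)
  have h34 := adj (Sum.inr 3) (Sum.inr 4) (by decide) (by unfold PAdj; decide)
  have hu0 := adj (Sum.inl 0) (Sum.inr 0) (by decide) (by unfold PAdj; decide)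
  have hu2 := adj (Sum.inl 0) (Sum.inr 2) (by decide) (by unfold PAdj; decide)
  have hu4 := adj (Sum.inl 0) (Sum.inr 4) (by decide) (by unfold PAdj; decide)
  have hv1 := adj (Sum.inl 1) (Sum.inr 1) (by decide) (by unfold PAdj; decide)
  have hv3 := adj (Sum.inl 1) (Sum.inr 3) (by decide) (by unfold PAdj; decide)
  generalize ψ (Sum.inl 0) = a at *
  generalize ψ (Sum.inl 1) = b at *
  generalize ψ (Sum.inr 0) = c0 at *
  generalize ψ (Sum.inr 1) = c1 at *
  generalize ψ (Sum.inr 2) = c2 at *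
  generalize ψ (Sum.inr 3) = c3 at *
  generalize ψ (Sum.inr 4) = c4 at *
  revert h01 h12 h23 h34 hu0 hu2 hu4 hv1 hv3
  revert a b c0 c1 c2 c3 c4
  decide
end

section
/- Let ψ be any proper 3-coloring of the graph P(u,v,5), with path vertices v₁, v₂, v₃, v₄, v₅. If ψ(u) = ψ(v), then ψ(v₁) = ψ(v₃) = ψ(v₅) and ψ(v₂) = ψ(v₄). -/
/-- Lemma 2(b): if `ψ(u) = ψ(v)` then `ψ(v₁) = ψ(v₃) = ψ(v₅)` and `ψ(v₂) = ψ(v₄)`. -/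
theorem stmt1 (ψ : (Fin 2 ⊕ Fin 5) → Fin 3) (hψ : ψ ∈ properColorings (Pgraph 5))
    (huv : ψ (Sum.inl 0) = ψ (Sum.inl 1)) :
    (ψ (Sum.inr 0) = ψ (Sum.inr 2) ∧ ψ (Sum.inr 2) = ψ (Sum.inr 4)) ∧
      ψ (Sum.inr 1) = ψ (Sum.inr 3) := by
  have adj : ∀ x y, PAdj 5 x y → x ≠ y → ψ x ≠ ψ y := by
    intro x y h hne
    exact hψ x y ⟨hne, Or.inl h⟩
  have h01 := adj (Sum.inr 0) (Sum.inr 1) (by simp only [PAdj]; decide) (by simp)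
  have h12 := adj (Sum.inr 1) (Sum.inr 2) (by simp only [PAdj]; decide) (by simp)
  have h23 := adj (Sum.inr 2) (Sum.inr 3) (by simp only [PAdj]; decide) (by simp)
  have h34 := adj (Sum.inr 3) (Sum.inr 4) (by simp only [PAdj]; decide) (by simp)
  have hu0 := adj (Sum.inl 0) (Sum.inr 0) (by simp only [PAdj]; decide) (by simp)
  have hu2 := adj (Sum.inl 0) (Sum.inr 2) (by simp only [PAdj]; decide) (by simp)
  have hu4 := adj (Sum.inl 0) (Sum.inr 4) (by simp only [PAdj]; decide) (by simp)
  have hv1 := adj (Sum.inl 1) (Sum.inr 1) (by simp only [PAdj]; decide) (by simp)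
  have hv3 := adj (Sum.inl 1) (Sum.inr 3) (by simp only [PAdj]; decide) (by simp)
  rw [huv] at hu0 hu2 hu4
  have b0 := (ψ (Sum.inr 0)).isLt
  have b1 := (ψ (Sum.inr 1)).isLt
  have b2 := (ψ (Sum.inr 2)).isLt
  have b3 := (ψ (Sum.inr 3)).isLt
  have b4 := (ψ (Sum.inr 4)).isLt
  have ba := (ψ (Sum.inl 1)).isLt
  simp only [ne_eq, ← Fin.val_eq_val] at h01 h12 h23 h34 hu0 hu2 hu4 hv1 hv3 ⊢
  omega
end

section
/- For every positive integer b and every color c in the 3-element color set, the graph P(u,v,b) has exactly two proper 3-colorings ψ with ψ(u) = ψ(v) = c. -/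
lemma fin3_det (a x d : Fin 3) (h1 : a ≠ d) (h2 : x ≠ d) (h3 : a ≠ x) : x = -(d + a) := by
  revert a x d; decide

lemma fin3_neg (c x : Fin 3) (h : x ≠ c) : -(c + x) ≠ c ∧ -(c + x) ≠ x := by
  revert c x; decide

lemma fin3_negneg (c x : Fin 3) : -(c + -(c + x)) = x := by revert c x; decide

lemma adj_u {b : ℕ} (j : Fin b) (h : (j : ℕ) % 2 = 0) :
    (Pgraph b).Adj (Sum.inl 0) (Sum.inr j) := by
  rw [Pgraph, SimpleGraph.fromRel_adj]
  exact ⟨by simp, Or.inl (by show (0 : ℕ) = (j : ℕ) % 2; omega)⟩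

lemma adj_v {b : ℕ} (j : Fin b) (h : (j : ℕ) % 2 = 1) :
    (Pgraph b).Adj (Sum.inl 1) (Sum.inr j) := by
  rw [Pgraph, SimpleGraph.fromRel_adj]
  exact ⟨by simp, Or.inl (by show (1 : ℕ) = (j : ℕ) % 2; omega)⟩

lemma adj_path {b : ℕ} (i j : Fin b) (h : (j : ℕ) = (i : ℕ) + 1) :
    (Pgraph b).Adj (Sum.inr i) (Sum.inr j) := by
  rw [Pgraph, SimpleGraph.fromRel_adj]
  refine ⟨?_, Or.inl h⟩
  intro he
  have : i = j := by exact Sum.inr.inj he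
  omega

lemma ne_c {b : ℕ} (c : Fin 3) (ψ : (Fin 2 ⊕ Fin b) → Fin 3)
    (hψ : ψ ∈ properColorings (Pgraph b)) (h0 : ψ (Sum.inl 0) = c) (h1 : ψ (Sum.inl 1) = c)
    (j : Fin b) : ψ (Sum.inr j) ≠ c := by
  rcases Nat.mod_two_eq_zero_or_one (j : ℕ) with h | h
  · have := hψ _ _ (adj_u j h)
    rw [h0] at this
    exact this.symm
  · have := hψ _ _ (adj_v j h)
    rw [h1] at this
    exact this.symm

lemma key {b : ℕ} (hb : 1 ≤ b) (c : Fin 3) (ψ : (Fin 2 ⊕ Fin b) → Fin 3)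
    (hψ : ψ ∈ properColorings (Pgraph b)) (h0 : ψ (Sum.inl 0) = c) (h1 : ψ (Sum.inl 1) = c) :
    ∀ n (hn : n < b), ψ (Sum.inr ⟨n, hn⟩) =
      if n % 2 = 0 then ψ (Sum.inr ⟨0, hb⟩) else -(c + ψ (Sum.inr ⟨0, hb⟩)) := by
  intro n
  induction n with
  | zero => intro hn; simp
  | succ m ih =>
    intro hn
    have hm : m < b := Nat.lt_of_succ_lt hn
    have hprev := ih hm
    have hne := hψ _ _ (adj_path ⟨m, hm⟩ ⟨m + 1, hn⟩ rfl)
    have hnc' := ne_c c ψ hψ h0 h1 ⟨m + 1, hn⟩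
    have hnc := ne_c c ψ hψ h0 h1 ⟨m, hm⟩
    rcases Nat.mod_two_eq_zero_or_one m with h | h
    · rw [if_pos h] at hprev
      rw [if_neg (by omega)]
      rw [← hprev]
      exact fin3_det _ _ _ hnc hnc' hne
    · rw [if_neg (by omega)] at hprev
      rw [if_pos (by omega)]
      have := fin3_det _ _ _ hnc hnc' hne
      rw [this, hprev, fin3_negneg]

/-- The explicit coloring with value `x` on even-index path vertices. -/
def col (b : ℕ) (c x : Fin 3) : (Fin 2 ⊕ Fin b) → Fin 3 :=
  Sum.elim (fun _ => c) (fun j => if (j : ℕ) % 2 = 0 then x else -(c + x))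

lemma col_proper (b : ℕ) (c x : Fin 3) (hx : x ≠ c) :
    col b c x ∈ properColorings (Pgraph b) := by
  have hd := fin3_neg c x hx
  have H : ∀ p q, PAdj b p q → col b c x p ≠ col b c x q := by
    rintro (p | i) (q | j) h
    · exact absurd h not_false
    · show c ≠ if (j : ℕ) % 2 = 0 then x else -(c + x)
      split
      · exact hx.symm
      · exact hd.1.symm
    · exact absurd h not_false
    · have h' : (j : ℕ) = (i : ℕ) + 1 := h
      show (if (i : ℕ) % 2 = 0 then x else -(c + x)) ≠ if (j : ℕ) % 2 = 0 then x else -(c + x)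
      rcases Nat.mod_two_eq_zero_or_one (i : ℕ) with hi | hi
      · rw [if_pos hi, if_neg (by omega)]
        exact hd.2.symm
      · rw [if_neg (by omega), if_pos (by omega)]
        exact hd.2
  intro a a' hadj
  rw [Pgraph, SimpleGraph.fromRel_adj] at hadj
  rcases hadj.2 with h | h
  · exact H _ _ h
  · exact (H _ _ h).symm

/-- For any `b ≥ 1` and any color `c`, the graph `P(u,v,b)` has exactly two proper
3-colorings assigning both `u` and `v` the color `c`. -/
theorem stmt2 (b : ℕ) (hb : 1 ≤ b) (c : Fin 3) :
    Nat.card {ψ : (Fin 2 ⊕ Fin b) → Fin 3 //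
      ψ ∈ properColorings (Pgraph b) ∧ ψ (Sum.inl 0) = c ∧ ψ (Sum.inl 1) = c} = 2 := by
  have e : {ψ : (Fin 2 ⊕ Fin b) → Fin 3 //
      ψ ∈ properColorings (Pgraph b) ∧ ψ (Sum.inl 0) = c ∧ ψ (Sum.inl 1) = c} ≃
      {x : Fin 3 // x ≠ c} := by
    refine ⟨fun ψ => ⟨ψ.1 (Sum.inr ⟨0, hb⟩),
        ne_c c ψ.1 ψ.2.1 ψ.2.2.1 ψ.2.2.2 ⟨0, hb⟩⟩,
      fun x => ⟨col b c x.1, col_proper b c x.1 x.2, rfl, rfl⟩, ?_, ?_⟩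
    · rintro ⟨ψ, hψ, h0, h1⟩
      apply Subtype.ext
      funext a
      rcases a with p | j
      · fin_cases p
        · exact h0.symm
        · exact h1.symm
      · show (if (j : ℕ) % 2 = 0 then ψ (Sum.inr ⟨0, hb⟩) else -(c + ψ (Sum.inr ⟨0, hb⟩))) =
          ψ (Sum.inr j)
        exact (key hb c ψ hψ h0 h1 j.1 j.2).symm
    · rintro ⟨x, hx⟩
      apply Subtype.ext
      show (if (0 : ℕ) % 2 = 0 then x else -(c + x)) = x
      simp
  rw [Nat.card_congr e, Nat.card_eq_fintype_card, Fintype.card_subtype_compl,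
    Fintype.card_subtype_eq, Fintype.card_fin]
end

section
/- For every positive integer b and any two (not necessarily distinct) colors c_u, c_v in the 3-element color set, the number of proper 3-colorings ψ of P(u,v,b) with ψ(u) = c_u and ψ(v) = c_v is at most 2^b. -/
lemma card_ne_two (d : Fin 3) : Fintype.card {c : Fin 3 // c ≠ d} = 2 := by
  fin_cases d <;> decide

/-- For any `b ≥ 1` and any colors `cu`, `cv`, the number of proper 3-colorings of
`P(u,v,b)` with `ψ(u) = cu` and `ψ(v) = cv` is at most `2^b`. -/
theorem stmt3 (b : ℕ) (hb : 1 ≤ b) (cu cv : Fin 3) :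
    Nat.card {ψ : (Fin 2 ⊕ Fin b) → Fin 3 //
      ψ ∈ properColorings (Pgraph b) ∧ ψ (Sum.inl 0) = cu ∧ ψ (Sum.inl 1) = cv} ≤ 2 ^ b := by
  set d : Fin b → Fin 3 := fun i => if (i : ℕ) % 2 = 0 then cu else cv with hd
  have key : ∀ ψ : {ψ : (Fin 2 ⊕ Fin b) → Fin 3 //
      ψ ∈ properColorings (Pgraph b) ∧ ψ (Sum.inl 0) = cu ∧ ψ (Sum.inl 1) = cv},
      ∀ i : Fin b, ψ.1 (Sum.inr i) ≠ d i := by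
    rintro ⟨ψ, hψ, hu, hv⟩ i
    have hadj : (Pgraph b).Adj (Sum.inl ⟨(i : ℕ) % 2, by omega⟩) (Sum.inr i) := by
      refine ⟨by simp, Or.inl ?_⟩
      show ((⟨(i : ℕ) % 2, by omega⟩ : Fin 2) : ℕ) = (i : ℕ) % 2
      rfl
    have H := (hψ _ _ hadj).symm
    by_cases h : (i : ℕ) % 2 = 0
    · have e0 : (⟨(i : ℕ) % 2, by omega⟩ : Fin 2) = (0 : Fin 2) := Fin.ext h
      rw [e0, hu] at H
      simpa [hd, h] using H
    · have e1 : (⟨(i : ℕ) % 2, by omega⟩ : Fin 2) = (1 : Fin 2) := Fin.ext (by show (i : ℕ) % 2 = 1; omega)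
      rw [e1, hv] at H
      simpa [hd, h] using H
  have inj : Function.Injective
      (fun ψ : {ψ : (Fin 2 ⊕ Fin b) → Fin 3 //
        ψ ∈ properColorings (Pgraph b) ∧ ψ (Sum.inl 0) = cu ∧ ψ (Sum.inl 1) = cv} =>
        (fun i => (⟨ψ.1 (Sum.inr i), key ψ i⟩ : {c : Fin 3 // c ≠ d i}))) := by
    rintro ⟨ψ, hψ, hu, hv⟩ ⟨φ, hφ, hu', hv'⟩ h
    have heq : ψ = φ := by
      funext x
      cases x with
      | inl x =>
        match x with
        | 0 => rw [hu, hu']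
        | 1 => rw [hv, hv']
      | inr i => exact congrArg Subtype.val (congrFun h i)
    exact Subtype.ext heq
  calc Nat.card _ ≤ Nat.card (∀ i : Fin b, {c : Fin 3 // c ≠ d i}) :=
        Nat.card_le_card_of_injective _ inj
    _ = 2 ^ b := by
        rw [Nat.card_eq_fintype_card, Fintype.card_pi]
        simp [card_ne_two]
end

section
/- For all integers ℓ ≥ 0 and k ≥ 1, the graph T(u,v,k,ℓ) is triangle-free, i.e., it contains no clique on 3 vertices. -/
/-- The type of "inner" vertices of `T(u,v,k,ℓ)` (all vertices except the two
special vertices `u, v`). At level `0` these are the `2^k` path vertices of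
`P(u,v,2^k)`; at level `ℓ+1` they are the five path vertices `v₁,…,v₅` of the
base copy of `P(u,v,5)` together with the inner vertices of the three glued
copies of `T(·,·,k,ℓ)`. -/
def TInner (k : ℕ) : ℕ → Type
  | 0 => Fin (2 ^ k)
  | ℓ + 1 => Fin 5 ⊕ (Fin 3 × TInner k ℓ)

/-- The vertex type of `T(u,v,k,ℓ)`: the special vertices `u = Sum.inl 0`,
`v = Sum.inl 1` together with the inner vertices. -/
abbrev TVert (k ℓ : ℕ) : Type := Fin 2 ⊕ TInner k ℓ

/-- The pair of path vertices of `P(u,v,5)` onto which the `c`-th copy of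
`T(·,·,k,ℓ-1)` is glued: `(v₁,v₃)` for `c = 0`, `(v₂,v₄)` for `c = 1`,
`(v₃,v₅)` for `c = 2` (0-indexed). -/
def gluePair (c : Fin 3) : Fin 5 × Fin 5 :=
  (⟨c.val, by omega⟩, ⟨c.val + 2, by have := c.isLt; omega⟩)

/-- The embedding of the `c`-th copy of `T(·,·,k,ℓ)` into `T(u,v,k,ℓ+1)`:
its special vertices are identified with the glue pair, and its inner vertices
are tagged with `c`. -/
def embedT (k ℓ : ℕ) (c : Fin 3) : TVert k ℓ → TVert k (ℓ + 1)
  | Sum.inl x => if x = 0 then Sum.inr (Sum.inl (gluePair c).1)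
                 else Sum.inr (Sum.inl (gluePair c).2)
  | Sum.inr w => Sum.inr (Sum.inr (c, w))

/-- The embedding of the base copy of `P(u,v,5)` into `T(u,v,k,ℓ+1)`. -/
def embedP (k ℓ : ℕ) : (Fin 2 ⊕ Fin 5) → TVert k (ℓ + 1)
  | Sum.inl x => Sum.inl x
  | Sum.inr y => Sum.inr (Sum.inl y)

/-- The graph `T(u,v,k,ℓ)`, defined recursively: `T(u,v,k,0) = P(u,v,2^k)`, and
`T(u,v,k,ℓ+1)` is obtained from `P(u,v,5)` by gluing three copies of
`T(·,·,k,ℓ)` onto the pairs `(v₁,v₃)`, `(v₂,v₄)`, `(v₃,v₅)`. -/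
def TGraph (k : ℕ) : (ℓ : ℕ) → SimpleGraph (TVert k ℓ)
  | 0 => Pgraph (2 ^ k)
  | ℓ + 1 => SimpleGraph.fromRel (fun a b =>
      (∃ x y, (Pgraph 5).Adj x y ∧ a = embedP k ℓ x ∧ b = embedP k ℓ y) ∨
      (∃ c x y, (TGraph k ℓ).Adj x y ∧ a = embedT k ℓ c x ∧ b = embedT k ℓ c y))

/-! `P(u,v,b)` is bipartite, hence triangle-free. In `T(u,v,k,ℓ+1)` the base copy of `P(u,v,5)`
and each glued copy of `T(u,v,k,ℓ)` are induced subgraphs: the special vertices `u, v` are never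
adjacent, and the two vertices a copy is glued onto have the same colour in `P(u,v,5)`. A vertex
outside the base copy is an inner vertex of some glued copy, and all its neighbours lie in that
copy. So every clique lies in a single piece, and induction on `ℓ` concludes. -/

open SimpleGraph Function

theorem SimpleGraph.IsNClique.preimage {V W : Type*} {G : SimpleGraph V} {H : SimpleGraph W}
    (f : H ↪g G) {n : ℕ} {t : Finset V} (ht : G.IsNClique n t) (hsub : ↑t ⊆ Set.range f) :
    H.IsNClique n (t.preimage f f.injective.injOn) := by
  classical
  refine ⟨fun a ha b hb hab => ?_, ?_⟩
  · exact f.map_adj_iff.1 (ht.isClique (Finset.mem_preimage.1 ha) (Finset.mem_preimage.1 hb)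
      (f.injective.ne hab))
  · rw [Finset.card_preimage, Finset.filter_true_of_mem hsub, ht.card_eq]

def Pcoloring (b : ℕ) : (Pgraph b).Coloring (Fin 2) :=
  Coloring.mk (Sum.elim Fin.rev fun i => ⟨i % 2, Nat.mod_lt _ two_pos⟩) <| by
    rintro (x | i) (y | j) h <;>
      simp only [Pgraph, fromRel_adj, PAdj, or_false, false_or, and_false] at h <;>
      simp only [Sum.elim_inl, Sum.elim_inr, ne_eq, Fin.ext_iff, Fin.val_rev] <;> omega

theorem Pgraph_cliqueFree_three (b : ℕ) : (Pgraph b).CliqueFree 3 :=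
  (Pcoloring b).colorable.cliqueFree (by simp)

theorem Pgraph_not_adj_inl {b : ℕ} (s t : Fin 2) : ¬ (Pgraph b).Adj (.inl s) (.inl t) := by
  simp [Pgraph, PAdj]

/-- The vertex `v_{c+2s+1}` of `P(u,v,5)` onto which the special vertex `s` of the `c`-th copy
is glued. -/
def glueVertex (c : Fin 3) (s : Fin 2) : Fin 5 := ⟨c + 2 * s, by omega⟩

theorem glueVertex_injective (c : Fin 3) : Injective (glueVertex c) := by
  intro s t h
  simp only [glueVertex, Fin.mk.injEq] at h
  omega

theorem Pcoloring_glueVertex (c : Fin 3) (s : Fin 2) :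
    Pcoloring 5 (.inr (glueVertex c s)) = Pcoloring 5 (.inr (glueVertex c 0)) := by
  simp only [Pcoloring, Coloring.mk, RelHom.coeFn_mk, Sum.elim_inr, glueVertex, Fin.mk.injEq]
  omega

section Gluing

variable {k ℓ : ℕ}

theorem embedT_inl (c : Fin 3) (s : Fin 2) :
    embedT k ℓ c (.inl s) = .inr (.inl (glueVertex c s)) := by
  fin_cases s <;> rfl

theorem embedP_injective : Injective (embedP k ℓ) := by
  rintro (x | x) (y | y) h <;> cases h <;> rfl

theorem embedT_injective (c : Fin 3) : Injective (embedT k ℓ c) := by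
  rintro (s | w) (t | w') h
  · rw [embedT_inl, embedT_inl] at h
    exact congrArg _ (glueVertex_injective c (Sum.inl_injective (Sum.inr_injective h)))
  · rw [embedT_inl] at h; cases h
  · rw [embedT_inl] at h; cases h
  · cases h; rfl

theorem embedT_ne_inl (c : Fin 3) (x : TVert k ℓ) (s : Fin 2) : embedT k ℓ c x ≠ .inl s := by
  rcases x with t | w
  · rw [embedT_inl]; exact Sum.inr_ne_inl
  · exact Sum.inr_ne_inl

theorem exists_eq_inl_of_embedT_eq_embedP {c : Fin 3} {x : TVert k ℓ} {p : Fin 2 ⊕ Fin 5}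
    (h : embedT k ℓ c x = embedP k ℓ p) : ∃ s, x = .inl s ∧ p = .inr (glueVertex c s) := by
  rcases x with s | w
  · refine ⟨s, rfl, embedP_injective (k := k) (ℓ := ℓ) ?_⟩
    rw [← h, embedT_inl]; rfl
  · rcases p with _ | _ <;> cases h

theorem exists_eq_inl_of_embedT_eq_embedT {c c' : Fin 3} (hc : c ≠ c') {x x' : TVert k ℓ}
    (h : embedT k ℓ c x = embedT k ℓ c' x') : ∃ s, x = .inl s := by
  rcases x with s | w
  · exact ⟨s, rfl⟩
  · rcases x' with s' | w'
    · rw [embedT_inl] at h; cases h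
    · cases h; exact absurd rfl hc

theorem TGraph_succ_adj {a b : TVert k (ℓ + 1)} (h : (TGraph k (ℓ + 1)).Adj a b) :
    (∃ x y, (Pgraph 5).Adj x y ∧ a = embedP k ℓ x ∧ b = embedP k ℓ y) ∨
    (∃ c x y, (TGraph k ℓ).Adj x y ∧ a = embedT k ℓ c x ∧ b = embedT k ℓ c y) := by
  rw [TGraph, fromRel_adj] at h
  obtain ⟨-, h | ⟨x, y, hxy, hb, ha⟩ | ⟨c, x, y, hxy, hb, ha⟩⟩ := h
  · exact h
  · exact .inl ⟨y, x, hxy.symm, ha, hb⟩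
  · exact .inr ⟨c, y, x, hxy.symm, ha, hb⟩

theorem TGraph_not_adj_inl (s t : Fin 2) : ¬ (TGraph k ℓ).Adj (.inl s) (.inl t) := by
  cases ℓ with
  | zero => exact Pgraph_not_adj_inl s t
  | succ ℓ =>
    intro h
    rcases TGraph_succ_adj h with ⟨x, y, hxy, hx, hy⟩ | ⟨c, x, y, -, hx, -⟩
    · have hx : x = .inl s := embedP_injective (k := k) (ℓ := ℓ) hx.symm
      have hy : y = .inl t := embedP_injective (k := k) (ℓ := ℓ) hy.symm
      exact Pgraph_not_adj_inl s t (hx ▸ hy ▸ hxy)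
    · exact embedT_ne_inl c x s hx.symm

variable (k ℓ)

def embedPEmbedding : Pgraph 5 ↪g TGraph k (ℓ + 1) where
  toFun := embedP k ℓ
  inj' := embedP_injective
  map_rel_iff' {p q} := by
    refine ⟨fun h => ?_, fun h => ?_⟩
    · rcases TGraph_succ_adj h with ⟨x, y, hxy, hx, hy⟩ | ⟨c, x, y, hxy, hx, hy⟩
      · rwa [embedP_injective hx, embedP_injective hy]
      · obtain ⟨s, rfl, -⟩ := exists_eq_inl_of_embedT_eq_embedP hx.symm
        obtain ⟨t, rfl, -⟩ := exists_eq_inl_of_embedT_eq_embedP hy.symm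
        exact absurd hxy (TGraph_not_adj_inl s t)
    · exact (fromRel_adj _ _ _).2 ⟨embedP_injective.ne h.ne, .inl (.inl ⟨p, q, h, rfl, rfl⟩)⟩

def embedTEmbedding (c : Fin 3) : TGraph k ℓ ↪g TGraph k (ℓ + 1) where
  toFun := embedT k ℓ c
  inj' := embedT_injective c
  map_rel_iff' {x y} := by
    refine ⟨fun h => ?_, fun h => ?_⟩
    · rcases TGraph_succ_adj h with ⟨p, q, hpq, hp, hq⟩ | ⟨c', x', y', hxy, hx, hy⟩
      · obtain ⟨s, -, rfl⟩ := exists_eq_inl_of_embedT_eq_embedP hp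
        obtain ⟨t, -, rfl⟩ := exists_eq_inl_of_embedT_eq_embedP hq
        exact absurd (by rw [Pcoloring_glueVertex, Pcoloring_glueVertex c t])
          ((Pcoloring 5).valid hpq)
      · obtain rfl | hc := eq_or_ne c' c
        · rwa [embedT_injective c' hx, embedT_injective c' hy]
        · obtain ⟨s, rfl⟩ := exists_eq_inl_of_embedT_eq_embedT hc hx.symm
          obtain ⟨t, rfl⟩ := exists_eq_inl_of_embedT_eq_embedT hc hy.symm
          exact absurd hxy (TGraph_not_adj_inl s t)
    · exact (fromRel_adj _ _ _).2
        ⟨(embedT_injective c).ne h.ne, .inl (.inr ⟨c, x, y, h, rfl, rfl⟩)⟩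

variable {k ℓ}

theorem mem_range_embedT_of_adj {c : Fin 3} {w : TInner k ℓ} {b : TVert k (ℓ + 1)}
    (h : (TGraph k (ℓ + 1)).Adj (.inr (.inr (c, w))) b) : b ∈ Set.range (embedT k ℓ c) := by
  rcases TGraph_succ_adj h with ⟨p, -, -, hp, -⟩ | ⟨c', x, y, -, hx, hy⟩
  · rcases p with _ | _ <;> cases hp
  · rcases x with s | w'
    · rw [embedT_inl] at hx; cases hx
    · cases hx; exact ⟨y, hy.symm⟩

theorem TGraph_succ_cliqueFree {n : ℕ} (hP : (Pgraph 5).CliqueFree n)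
    (hT : (TGraph k ℓ).CliqueFree n) : (TGraph k (ℓ + 1)).CliqueFree n := by
  intro t ht
  by_cases hsub : ↑t ⊆ Set.range (embedP k ℓ)
  · exact hP _ (ht.preimage (embedPEmbedding k ℓ) hsub)
  obtain ⟨a, hat, ha⟩ := Set.not_subset.1 hsub
  obtain ⟨c, w, rfl⟩ : ∃ c w, a = .inr (.inr (c, w)) := by
    rcases a with s | y | ⟨c, w⟩
    · exact absurd ⟨.inl s, rfl⟩ ha
    · exact absurd ⟨.inr y, rfl⟩ ha
    · exact ⟨c, w, rfl⟩
  refine hT _ (ht.preimage (embedTEmbedding k ℓ c) fun b hb => ?_)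
  obtain rfl | hne := eq_or_ne (.inr (.inr (c, w))) b
  · exact ⟨.inr w, rfl⟩
  · exact mem_range_embedT_of_adj (ht.isClique hat hb hne)

end Gluing

theorem stmt5_general (k ℓ : ℕ) : (TGraph k ℓ).CliqueFree 3 := by
  induction ℓ with
  | zero => exact Pgraph_cliqueFree_three _
  | succ ℓ ih => exact TGraph_succ_cliqueFree (Pgraph_cliqueFree_three 5) ih

/-- For all `ℓ ≥ 0` and `k ≥ 1`, the graph `T(u,v,k,ℓ)` is triangle-free. -/
theorem stmt5 (k ℓ : ℕ) (hk : 1 ≤ k) : (TGraph k ℓ).CliqueFree 3 :=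
  stmt5_general k ℓ
end

section
/- For every integer ℓ ≥ 1, let k = ⌈ℓ · log₂(3/2)⌉ and let n_ℓ denote the number of vertices of the graph T(u,v,k,ℓ). Then n_ℓ ≥ (9/2)^ℓ. -/
instance TInner.finite (k : ℕ) : ∀ ℓ, Finite (TInner k ℓ)
  | 0 => by unfold TInner; infer_instance
  | ℓ + 1 => by
      have := TInner.finite k ℓ
      unfold TInner; infer_instance

lemma TInner_card_ge (k : ℕ) : ∀ ℓ, 3 ^ ℓ * 2 ^ k ≤ Nat.card (TInner k ℓ)
  | 0 => by simp [TInner]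
  | ℓ + 1 => by
      have ih := TInner_card_ge k ℓ
      have : Nat.card (TInner k (ℓ + 1)) = 5 + 3 * Nat.card (TInner k ℓ) := by
        show Nat.card (Fin 5 ⊕ (Fin 3 × TInner k ℓ)) = _
        rw [Nat.card_sum, Nat.card_prod]
        simp
      rw [this]
      calc 3 ^ (ℓ + 1) * 2 ^ k = 3 * (3 ^ ℓ * 2 ^ k) := by ring
      _ ≤ 3 * Nat.card (TInner k ℓ) := by omega
      _ ≤ 5 + 3 * Nat.card (TInner k ℓ) := by omega

/-- For every `ℓ ≥ 1`, with `k = ⌈ℓ · log₂(3/2)⌉`, the number `n_ℓ` of vertices of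
`T(u,v,k,ℓ)` satisfies `n_ℓ ≥ (9/2)^ℓ`. -/
theorem stmt13 (ℓ k : ℕ) (hℓ : 1 ≤ ℓ)
    (hk : (k : ℤ) = ⌈(ℓ : ℝ) * Real.logb 2 (3 / 2)⌉) :
    ((9 : ℝ) / 2) ^ ℓ ≤ (Nat.card (TVert k ℓ) : ℝ) := by
  have hcard : 3 ^ ℓ * 2 ^ k ≤ Nat.card (TVert k ℓ) := by
    have h1 : Nat.card (TVert k ℓ) = 2 + Nat.card (TInner k ℓ) := by
      rw [Nat.card_sum]; simp
    have := TInner_card_ge k ℓ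
    omega
  have hk' : (ℓ : ℝ) * Real.logb 2 (3 / 2) ≤ (k : ℝ) := by
    have := Int.le_ceil ((ℓ : ℝ) * Real.logb 2 (3 / 2))
    rw [← hk] at this
    exact_mod_cast this
  have h2k : ((3 : ℝ) / 2) ^ ℓ ≤ (2 : ℝ) ^ k := by
    have h1 : ((3 : ℝ) / 2) ^ ℓ = (2 : ℝ) ^ ((ℓ : ℝ) * Real.logb 2 (3 / 2)) := by
      rw [mul_comm, Real.rpow_mul (by norm_num),
        Real.rpow_logb (by norm_num) (by norm_num) (by norm_num), Real.rpow_natCast]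
    rw [h1, ← Real.rpow_natCast 2 k]
    exact Real.rpow_le_rpow_of_exponent_le (by norm_num) hk'
  calc ((9 : ℝ) / 2) ^ ℓ = 3 ^ ℓ * ((3 : ℝ) / 2) ^ ℓ := by
        rw [← mul_pow]; norm_num
    _ ≤ 3 ^ ℓ * (2 : ℝ) ^ k := by
        apply mul_le_mul_of_nonneg_left h2k (by positivity)
    _ = ((3 ^ ℓ * 2 ^ k : ℕ) : ℝ) := by push_cast; ring
    _ ≤ (Nat.card (TVert k ℓ) : ℝ) := by exact_mod_cast hcard
end
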